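/- arXiv:2207.10224 — 2 statements merged into one kernel-verified Lean document; each statement's English description precedes it below -/
import Mathlib

section
/- Left-trimming identity: S(n,k)(a,b;b−a) = S(n+1,k+1)(a,b;0) for all n ≥ 0 and −1 ≤ k ≤ n (with the convention that S vanishes outside its triangle). -/
/-- Stirling subset numbers (Stirling numbers of the second kind). -/
def stirling2 : ℕ → ℕ → ℕ
  | 0, 0 => 1
  | 0, _+1 => 0
  | _+1, 0 => 0
  | n+1, k+1 => (k+1) * stirling2 n (k+1) + stirling2 n k

/-- Generalized Stirling numbers of Hsu and Shiue, S(n,k)(a,b;r). -/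
def gS (a b r : ℚ) : ℕ → ℕ → ℚ
  | 0, 0 => 1
  | 0, _+1 => 0
  | n+1, 0 => (-a * n + r) * gS a b r n 0
  | n+1, k+1 => (-a * n + b * (k+1) + r) * gS a b r n (k+1) + gS a b r n k

lemma gS_eq_zero (a b r : ℚ) : ∀ n k : ℕ, n < k → gS a b r n k = 0 := by
  intro n
  induction n with
  | zero => intro k hk; cases k with
    | zero => omega
    | succ k => simp [gS]
  | succ n ih =>
    intro k hk
    cases k with
    | zero => omega
    | succ k =>
      rw [gS, ih (k+1) (by omega), ih k (by omega)]
      ring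

/-- Left-trimming identity, with the `k = -1` boundary case stated separately
as the vanishing of the left column of the `r = 0` triangle. -/
theorem gS_left_trimming (a b : ℚ) (n : ℕ) :
    (∀ k : ℕ, k ≤ n → gS a b (b - a) n k = gS a b 0 (n+1) (k+1)) ∧
    gS a b 0 (n+1) 0 = 0 := by
  induction n with
  | zero =>
    constructor
    · intro k hk
      interval_cases k
      simp [gS]
    · simp [gS]
  | succ n ih =>
    obtain ⟨ih1, ih2⟩ := ih
    have col : gS a b 0 (n+2) 0 = 0 := by
      rw [gS, ih2, mul_zero]
    refine ⟨?_, col⟩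
    intro k hk
    cases k with
    | zero =>
      rw [gS, gS, ih2, add_zero, ← ih1 0 (by omega)]
      push_cast
      ring
    | succ k =>
      rw [gS, gS]
      rw [ih1 k (by omega)]
      rcases Nat.lt_or_ge n (k+1) with h | h
      · rw [gS_eq_zero a b (b-a) n (k+1) h, gS_eq_zero a b 0 (n+1) (k+2) (by omega)]
        ring
      · rw [ih1 (k+1) h]
        push_cast
        ring
end

section
/- Product formula for generalized Stirling triangles: for all 0 ≤ k ≤ n and rationals a, b, c, r1, r2, S(n,k)(a,c; r1+r2) = Σ_{j=k}^{n} S(n,j)(a,b;r1) · S(j,k)(b,c;r2). In particular, Σ_{j=k}^{n} S(n,j)(a,b;r)·S(j,k)(b,a;−r) equals 1 if n=k and 0 otherwise. -/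
lemma gS_zero_of_lt (a b r : ℚ) : ∀ n k, n < k → gS a b r n k = 0 := by
  intro n
  induction n with
  | zero =>
    intro k hk
    match k, hk with
    | k+1, _ => rfl
  | succ n ih =>
    intro k hk
    match k, hk with
    | k+1, hk =>
      rw [gS, ih (k+1) (by omega), ih k (by omega)]
      ring

lemma key (a b c r1 r2 : ℚ) : ∀ n k, gS a c (r1 + r2) n k =
    ∑ j ∈ Finset.range (n+1), gS a b r1 n j * gS b c r2 j k := by
  intro n
  induction n with
  | zero =>
    intro k
    cases k with
    | zero => simp [gS]
    | succ k => simp [gS]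
  | succ n ih =>
    intro k
    have expand : ∀ j k', gS a b r1 (n+1) (j+1) * gS b c r2 (j+1) k' =
        ((-a * n + b * (j+1) + r1) * gS a b r1 n (j+1) + gS a b r1 n j) * gS b c r2 (j+1) k' := by
      intro j k'; rw [gS]
    cases k with
    | zero =>
      rw [gS, ih 0, Finset.sum_range_succ' _ (n+1)]
      have h0 : gS a b r1 (n+1) 0 * gS b c r2 0 0 = (-a * n + r1) * gS a b r1 n 0 := by
        rw [show gS a b r1 (n+1) 0 = (-a * (n:ℚ) + r1) * gS a b r1 n 0 from rfl,
          show gS b c r2 0 0 = (1:ℚ) from rfl]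
        ring
      rw [h0]
      have hterm : ∀ j ∈ Finset.range (n+1),
          gS a b r1 (n+1) (j+1) * gS b c r2 (j+1) 0 =
          ((-a * n + b * (j+1) + r1) * gS a b r1 n (j+1)) * gS b c r2 (j+1) 0
            + gS a b r1 n j * ((-b * j + r2) * gS b c r2 j 0) := by
        intro j _
        rw [expand, gS]
        ring
      rw [Finset.sum_congr rfl hterm, Finset.sum_add_distrib]
      have shift : (∑ j ∈ Finset.range (n+1),
          ((-a * n + b * (j+1) + r1) * gS a b r1 n (j+1)) * gS b c r2 (j+1) 0) =
          (∑ j ∈ Finset.range (n+1), ((-a * n + b * j + r1) * gS a b r1 n j) * gS b c r2 j 0)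
            - ((-a * n + r1) * gS a b r1 n 0) := by
        have := Finset.sum_range_succ'
          (fun j => ((-a * n + b * j + r1) * gS a b r1 n j) * gS b c r2 j 0) (n+1)
        rw [Finset.sum_range_succ
          (fun j => ((-a * n + b * j + r1) * gS a b r1 n j) * gS b c r2 j 0) (n+1)] at this
        rw [gS_zero_of_lt a b r1 n (n+1) (by omega)] at this
        push_cast at this ⊢
        rw [show gS b c r2 0 0 = 1 from rfl] at this
        -- this : sum + stuff
        linarith [this]
      rw [shift]
      have comb : (∑ j ∈ Finset.range (n+1), ((-a * ↑n + b * ↑j + r1) * gS a b r1 n j) * gS b c r2 j 0)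
          + (∑ j ∈ Finset.range (n+1), gS a b r1 n j * ((-b * ↑j + r2) * gS b c r2 j 0))
          = (-a * ↑n + (r1 + r2)) * ∑ j ∈ Finset.range (n+1), gS a b r1 n j * gS b c r2 j 0 := by
        rw [Finset.mul_sum, ← Finset.sum_add_distrib]
        exact Finset.sum_congr rfl fun j _ => by ring
      linarith [comb]
    | succ k =>
      rw [gS, ih (k+1), ih k, Finset.sum_range_succ' _ (n+1)]
      have h0 : gS b c r2 0 (k+1) = 0 := rfl
      rw [h0, mul_zero, add_zero]
      have hterm : ∀ j ∈ Finset.range (n+1),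
          gS a b r1 (n+1) (j+1) * gS b c r2 (j+1) (k+1) =
          ((-a * n + b * (j+1) + r1) * gS a b r1 n (j+1)) * gS b c r2 (j+1) (k+1)
            + gS a b r1 n j * ((-b * j + c * (k+1) + r2) * gS b c r2 j (k+1) + gS b c r2 j k) := by
        intro j _
        rw [expand, gS]
        ring
      rw [Finset.sum_congr rfl hterm, Finset.sum_add_distrib]
      have shift : (∑ j ∈ Finset.range (n+1),
          ((-a * n + b * (j+1) + r1) * gS a b r1 n (j+1)) * gS b c r2 (j+1) (k+1)) =
          (∑ j ∈ Finset.range (n+1), ((-a * n + b * j + r1) * gS a b r1 n j) * gS b c r2 j (k+1)) := by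
        have := Finset.sum_range_succ'
          (fun j => ((-a * n + b * j + r1) * gS a b r1 n j) * gS b c r2 j (k+1)) (n+1)
        rw [Finset.sum_range_succ
          (fun j => ((-a * n + b * j + r1) * gS a b r1 n j) * gS b c r2 j (k+1)) (n+1)] at this
        rw [gS_zero_of_lt a b r1 n (n+1) (by omega), h0] at this
        push_cast at this ⊢
        linarith [this]
      rw [shift]
      rw [← Finset.sum_add_distrib, Finset.mul_sum, ← Finset.sum_add_distrib]
      apply Finset.sum_congr rfl
      intro j _
      ring

lemma gS_diag (a : ℚ) : ∀ n k, gS a a 0 n k = if n = k then (1:ℚ) else 0 := by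
  intro n
  induction n with
  | zero =>
    intro k
    cases k with
    | zero => simp [gS]
    | succ k => simp [gS]
  | succ n ih =>
    intro k
    cases k with
    | zero =>
      rw [gS, ih 0]
      by_cases h : n = 0
      · subst h; norm_num
      · simp [h]
    | succ k =>
      rw [gS, ih (k+1), ih k]
      by_cases h1 : n = k
      · subst h1
        simp [Nat.succ_ne_self]
      · by_cases h2 : n = k + 1
        · subst h2
          have hne : ¬ (k+1+1 = k+1) := by omega
          rw [if_neg hne, if_pos rfl, if_neg h1]
          push_cast
          ring
        · have : ¬ (n+1 = k+1) := by omega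
          simp [h1, h2, this]

theorem gS_product_formula (a b c r1 r2 : ℚ) (n k : ℕ) (hkn : k ≤ n) :
    gS a c (r1 + r2) n k = ∑ j ∈ Finset.Icc k n, gS a b r1 n j * gS b c r2 j k ∧
    (∀ r : ℚ, ∑ j ∈ Finset.Icc k n, gS a b r n j * gS b a (-r) j k =
      if n = k then (1 : ℚ) else 0) := by
  have hIcc : ∀ (b' c' r1' r2' : ℚ), (∑ j ∈ Finset.Icc k n, gS a b' r1' n j * gS b' c' r2' j k)
      = ∑ j ∈ Finset.range (n+1), gS a b' r1' n j * gS b' c' r2' j k := by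
    intro b' c' r1' r2'
    apply Finset.sum_subset
    · intro j hj
      simp only [Finset.mem_Icc, Finset.mem_range] at *
      omega
    · intro j hj hj2
      simp only [Finset.mem_Icc, Finset.mem_range] at *
      rw [gS_zero_of_lt b' c' r2' j k (by omega), mul_zero]
  constructor
  · rw [hIcc, key]
  · intro r
    rw [hIcc, ← key a b a r (-r) n k]
    rw [show r + -r = 0 by ring, gS_diag]
end
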